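/- arXiv:0708.2347 — 2 statements merged into one kernel-verified Lean document; each statement's English description precedes it below -/
import Mathlib

section
/- For all integers r, s and all natural numbers n, the following identity holds: V_2·(Σ_{i=0}^{n} (−1)^i·U_{r+2i}·V_{s+2i}) = U_{r+s−2} + (−1)^n·U_{4n+r+s+2} − ε_n·V_2·q^r·U_{s−r}, where ε_n = 1 if n is even and ε_n = 0 if n is odd. -/
/-!
Each term is evaluated with the product formula `U a * V b = U (a + b) - q ^ |a| * U (b - a)` and
`V 2 * U m = U (m + 2) + U (m - 2)` (here `q * q = 1`, so `q ^ |a|` plays the role of `q ^ a`);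
the alternating sum of `U (c + 4 i - 2) + U (c + 4 i + 2)` then telescopes. Both formulas, and
`U (-a) = -q ^ |a| * U a`, hold because a two-sided solution of the recurrence is determined by
two consecutive values when `q` is invertible, so it suffices to compare values at `0` and `1`.
-/

open Finset

section Monoid

variable {M : Type*} [Monoid M] {q : M}

lemma pow_natAbs_sub_one_of_mul_self_eq_one (hq : q * q = 1) (a : ℤ) :
    q ^ (a - 1).natAbs = q * q ^ a.natAbs := by
  rcases le_or_gt a 0 with ha | ha
  · rw [show (a - 1).natAbs = a.natAbs + 1 by omega, pow_succ']
  · rw [show a.natAbs = (a - 1).natAbs + 1 by omega, pow_succ', ← mul_assoc, hq, one_mul]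

lemma pow_natAbs_sub_two_of_mul_self_eq_one (hq : q * q = 1) (a : ℤ) :
    q ^ (a - 2).natAbs = q ^ a.natAbs := by
  rw [show a - 2 = a - 1 - 1 by ring, pow_natAbs_sub_one_of_mul_self_eq_one hq,
    pow_natAbs_sub_one_of_mul_self_eq_one hq, ← mul_assoc, hq, one_mul]

lemma pow_natAbs_add_two_mul_of_mul_self_eq_one (hq : q * q = 1) (a : ℤ) (i : ℕ) :
    q ^ (a + 2 * i).natAbs = q ^ a.natAbs := by
  induction i with
  | zero => simp
  | succ i ih =>
    rw [← ih, ← pow_natAbs_sub_two_of_mul_self_eq_one hq]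
    congr 3
    push_cast
    ring

lemma pow_mul_pow_self_of_mul_self_eq_one (hq : q * q = 1) (m : ℕ) : q ^ m * q ^ m = 1 := by
  rw [← (Commute.refl q).mul_pow, hq, one_pow]

end Monoid

lemma sum_range_succ_neg_one_pow_mul_add {R : Type*} [CommRing R] (f : ℕ → R) (n : ℕ) :
    ∑ i ∈ range (n + 1), (-1) ^ i * (f i + f (i + 1)) = f 0 + (-1) ^ n * f (n + 1) := by
  calc ∑ i ∈ range (n + 1), (-1) ^ i * (f i + f (i + 1))
      = ∑ i ∈ range (n + 1), ((-1) ^ i * f i - (-1) ^ (i + 1) * f (i + 1)) :=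
        sum_congr rfl fun i _ ↦ by ring
    _ = f 0 + (-1) ^ n * f (n + 1) := by rw [sum_range_sub' (fun i ↦ (-1) ^ i * f i)]; ring

variable {R : Type*} [CommRing R]

def IsLucasRec (p q : R) (x : ℤ → R) : Prop :=
  ∀ n, x n = p * x (n - 1) - q * x (n - 2)

namespace IsLucasRec

variable {p q : R} {x y : ℤ → R}

lemma shift (hx : IsLucasRec p q x) (k : ℤ) : IsLucasRec p q (fun n ↦ x (n + k)) := fun n ↦ by
  simpa only [sub_add_eq_add_sub] using hx (n + k)

lemma const_mul (hx : IsLucasRec p q x) (c : R) : IsLucasRec p q (fun n ↦ c * x n) := fun n ↦ by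
  simp only [hx n]; ring

lemma sub (hx : IsLucasRec p q x) (hy : IsLucasRec p q y) :
    IsLucasRec p q (fun n ↦ x n - y n) := fun n ↦ by
  simp only [hx n, hy n]; ring

lemma reflect (hq : q * q = 1) (hx : IsLucasRec p q x) :
    IsLucasRec p q (fun n ↦ q ^ n.natAbs * x (-n)) := fun n ↦ by
  have h := hx (2 - n)
  rw [show 2 - n - 1 = -(n - 1) by ring, show 2 - n - 2 = -n by ring,
    show 2 - n = -(n - 2) by ring] at h
  simp only [pow_natAbs_sub_one_of_mul_self_eq_one hq, pow_natAbs_sub_two_of_mul_self_eq_one hq]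
  linear_combination q * q ^ n.natAbs * h - q ^ n.natAbs * x (-n) * hq

lemma ext (hq : IsUnit q) (hx : IsLucasRec p q x) (hy : IsLucasRec p q y)
    (h0 : x 0 = y 0) (h1 : x 1 = y 1) : x = y := by
  suffices h : ∀ n : ℤ, x n = y n ∧ x (n + 1) = y (n + 1) from funext fun n ↦ (h n).1
  intro n
  induction n using Int.induction_on with
  | zero => exact ⟨h0, by simpa using h1⟩
  | succ n ih =>
    refine ⟨ih.2, ?_⟩
    rw [hx, hy, add_sub_cancel_right, show (n : ℤ) + 1 + 1 - 2 = n by ring, ih.1, ih.2]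
  | pred n ih =>
    refine ⟨?_, by simpa using ih.1⟩
    apply hq.mul_left_cancel
    have hx' := hx (-n + 1)
    have hy' := hy (-n + 1)
    rw [add_sub_cancel_right, show -(n : ℤ) + 1 - 2 = -n - 1 by ring] at hx' hy'
    linear_combination hx' - hy' - ih.2 + p * ih.1

end IsLucasRec

section LucasSequences

variable {p q : R} {U V : ℤ → R} (hq : q * q = 1)
  (hU0 : U 0 = 0) (hU1 : U 1 = 1) (hU : IsLucasRec p q U)
  (hV0 : V 0 = 2) (hV1 : V 1 = p) (hV : IsLucasRec p q V)
include hq hU0 hU1 hU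

lemma lucasU_neg_one : U (-1) = -q := by
  have h := hU 1
  norm_num [hU0, hU1] at h
  linear_combination q * h - U (-1) * hq

lemma lucasU_neg (a : ℤ) : U (-a) = -(q ^ a.natAbs * U a) := by
  have hw := pow_mul_pow_self_of_mul_self_eq_one hq a.natAbs
  have h := congrFun (IsLucasRec.ext (.of_mul_eq_one q hq) (hU.reflect hq)
    (hU.const_mul (-1)) (by simp [hU0]) (by simp [lucasU_neg_one hq hU0 hU1 hU, hq, hU1])) a
  linear_combination q ^ a.natAbs * h - U (-a) * hw

include hV0 hV1 hV

lemma lucasU_mul_lucasV (a b : ℤ) : U a * V b = U (b + a) - q ^ a.natAbs * U (b - a) := by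
  have hw := pow_mul_pow_self_of_mul_self_eq_one hq a.natAbs
  have h := IsLucasRec.ext (.of_mul_eq_one q hq) (hV.const_mul (U a))
    ((hU.shift a).sub ((hU.shift (-a)).const_mul (q ^ a.natAbs))) ?_ ?_
  · simpa [sub_eq_add_neg] using congrFun h b
  · have := lucasU_neg hq hU0 hU1 hU a
    simp only [hV0, zero_add, this]
    linear_combination -U a * hw
  · have hneg := lucasU_neg hq hU0 hU1 hU (a - 1)
    have hrec := hU (1 + a)
    rw [neg_sub, pow_natAbs_sub_one_of_mul_self_eq_one hq] at hneg
    rw [add_sub_cancel_left, show 1 + a - 2 = a - 1 by ring] at hrec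
    simp only [hV1, ← sub_eq_add_neg, hneg]
    linear_combination -hrec - q * U (a - 1) * hw

lemma lucasV_two_mul_lucasU (m : ℤ) : V 2 * U m = U (m + 2) + U (m - 2) := by
  have hw := pow_mul_pow_self_of_mul_self_eq_one hq m.natAbs
  have hneg := lucasU_neg hq hU0 hU1 hU (m - 2)
  rw [neg_sub, pow_natAbs_sub_two_of_mul_self_eq_one hq] at hneg
  rw [mul_comm, lucasU_mul_lucasV hq hU0 hU1 hU hV0 hV1 hV, hneg, add_comm 2]
  linear_combination U (m - 2) * hw

lemma lucasV_two_mul_lucasU_mul_lucasV (a b : ℤ) :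
    V 2 * (U a * V b) = U (a + b + 2) + U (a + b - 2) - V 2 * q ^ a.natAbs * U (b - a) := by
  rw [lucasU_mul_lucasV hq hU0 hU1 hU hV0 hV1 hV, mul_sub,
    lucasV_two_mul_lucasU hq hU0 hU1 hU hV0 hV1 hV, add_comm b]
  ring

end LucasSequences

theorem stmt_5_general (p q : ℤ) (hq : q = 1 ∨ q = -1)
    (U V : ℤ → ℤ)
    (hU0 : U 0 = 0) (hU1 : U 1 = 1)
    (hUrec : ∀ n : ℤ, U n = p * U (n - 1) - q * U (n - 2))
    (hV0 : V 0 = 2) (hV1 : V 1 = p)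
    (hVrec : ∀ n : ℤ, V n = p * V (n - 1) - q * V (n - 2))
    (r s : ℤ) (n : ℕ) :
    V 2 * (∑ i ∈ Finset.range (n + 1), (-1 : ℤ) ^ i * (U (r + 2 * i) * V (s + 2 * i))) =
      U (r + s - 2) + (-1 : ℤ) ^ n * U (4 * n + r + s + 2) -
        (if Even n then (1 : ℤ) else 0) * V 2 * q ^ r.natAbs * U (s - r) := by
  have hq2 : q * q = 1 := by rcases hq with rfl | rfl <;> norm_num
  have hterm (i : ℕ) : V 2 * ((-1) ^ i * (U (r + 2 * i) * V (s + 2 * i))) =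
      (-1) ^ i * (U (r + s + 4 * i - 2) + U (r + s + 4 * ↑(i + 1) - 2)) -
        V 2 * q ^ r.natAbs * U (s - r) * (-1) ^ i := by
    rw [mul_left_comm, lucasV_two_mul_lucasU_mul_lucasV hq2 hU0 hU1 hUrec hV0 hV1 hVrec,
      pow_natAbs_add_two_mul_of_mul_self_eq_one hq2]
    push_cast
    ring_nf
  rw [mul_sum, sum_congr rfl fun i _ ↦ hterm i, sum_sub_distrib, ← mul_sum,
    sum_range_succ_neg_one_pow_mul_add (fun i ↦ U (r + s + 4 * i - 2)), neg_one_geom_sum]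
  simp only [Nat.even_add_one, ite_not]
  push_cast
  split_ifs <;> ring_nf

theorem stmt_5 (p q : ℤ) (hp : p ≠ 0) (hq : q = 1 ∨ q = -1)
    (hΔ : p ^ 2 - 4 * q ≠ 0)
    (U V : ℤ → ℤ)
    (hU0 : U 0 = 0) (hU1 : U 1 = 1)
    (hUrec : ∀ n : ℤ, U n = p * U (n - 1) - q * U (n - 2))
    (hV0 : V 0 = 2) (hV1 : V 1 = p)
    (hVrec : ∀ n : ℤ, V n = p * V (n - 1) - q * V (n - 2))
    (r s : ℤ) (n : ℕ) :
    V 2 * (∑ i ∈ Finset.range (n + 1), (-1 : ℤ) ^ i * (U (r + 2 * i) * V (s + 2 * i))) =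
      U (r + s - 2) + (-1 : ℤ) ^ n * U (4 * n + r + s + 2) -
        (if Even n then (1 : ℤ) else 0) * V 2 * q ^ r.natAbs * U (s - r) :=
  stmt_5_general p q hq U V hU0 hU1 hUrec hV0 hV1 hVrec r s n
end

section
/- For every integer k and every natural number m, the following two identities hold: Σ_{i=0}^{2m} (−1)^i·V_{2k+2i}² = d_m·V_{2k+2m}² − 2·p²·Δ·b_{m−1}, and Σ_{i=0}^{2m+1} (−1)^i·V_{2k+2i}² = p²·Δ·c_m·(1 − a_{k+m+1}·V_{2k+2m}). -/
/-!
Since `q ^ 2 = 1`, every solution `W` of the recurrence, restricted to a progression `x + 2ℤ`,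
satisfies `W (n + 2) = V 2 * W n - W (n - 2)`; and a solution of a two-sided recurrence whose
coefficient `q` is a unit is determined by two consecutive values. Comparing both sides as
functions of `t` gives the product formulas `W (x + 2t) + W (x - 2t) = W x * V (2t)` and
`V (x + 2t) - V (x - 2t) = Δ * U x * U (2t)`. In particular `V (2j) ^ 2 = V (4j) + 2` and
`V 2 * V (4j) = V (4j + 2) + V (4j - 2)`, so `V 2` times the alternating sum telescopes to
`V (4k - 2) ∓ V (4k + 4N - 2)` plus a constant, and the product formulas factor this boundary
term. Finally `V 2 = p ^ 2 - 2q` is a nonzero integer and is cancelled.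
-/

variable {R : Type*} [CommRing R]

def SolvesLucasRec (p q : R) (W : ℤ → R) : Prop :=
  ∀ n, W n = p * W (n - 1) - q * W (n - 2)

namespace SolvesLucasRec

variable {p q : R} {F G : ℤ → R}

theorem add (hF : SolvesLucasRec p q F) (hG : SolvesLucasRec p q G) :
    SolvesLucasRec p q (fun n => F n + G n) := fun n => by
  dsimp only; rw [hF n, hG n]; ring

theorem sub (hF : SolvesLucasRec p q F) (hG : SolvesLucasRec p q G) :
    SolvesLucasRec p q (fun n => F n - G n) := fun n => by
  dsimp only; rw [hF n, hG n]; ring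

theorem const_mul (hF : SolvesLucasRec p q F) (c : R) :
    SolvesLucasRec p q (fun n => c * F n) := fun n => by
  dsimp only; rw [hF n]; ring

theorem comp_add_const (hF : SolvesLucasRec p q F) (c : ℤ) :
    SolvesLucasRec p q (fun n => F (n + c)) := fun n => by
  simpa only [sub_add_eq_add_sub] using hF (n + c)

theorem eq_sub_two (hF : SolvesLucasRec p q F) (n : ℤ) :
    F n = (p ^ 2 - 2 * q) * F (n - 2) - q ^ 2 * F (n - 4) := by
  have h₀ := hF n
  have h₁ := hF (n - 1)
  have h₂ := hF (n - 2)
  rw [show n - 1 - 1 = n - 2 by ring, show n - 1 - 2 = n - 3 by ring] at h₁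
  rw [show n - 2 - 1 = n - 3 by ring, show n - 2 - 2 = n - 4 by ring] at h₂
  linear_combination h₀ + p * h₁ + q * h₂

theorem comp_two_mul_add (hF : SolvesLucasRec p q F) (hq : q ^ 2 = 1) (x : ℤ) :
    SolvesLucasRec (p ^ 2 - 2 * q) 1 (fun n => F (x + 2 * n)) := fun n => by
  have h := hF.eq_sub_two (x + 2 * n)
  rw [hq] at h
  dsimp only
  rw [show x + 2 * (n - 1) = x + 2 * n - 2 by ring, show x + 2 * (n - 2) = x + 2 * n - 4 by ring]
  exact h

theorem comp_sub_two_mul (hF : SolvesLucasRec p q F) (hq : q ^ 2 = 1) (x : ℤ) :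
    SolvesLucasRec (p ^ 2 - 2 * q) 1 (fun n => F (x - 2 * n)) := fun n => by
  have h := hF.eq_sub_two (x - 2 * n + 4)
  rw [hq, show x - 2 * n + 4 - 2 = x - 2 * (n - 1) by ring,
    show x - 2 * n + 4 = x - 2 * (n - 2) by ring, show x - 2 * (n - 2) - 4 = x - 2 * n by ring] at h
  linear_combination h

theorem ext (hq : IsUnit q) (hF : SolvesLucasRec p q F) (hG : SolvesLucasRec p q G)
    (h₀ : F 0 = G 0) (h₁ : F 1 = G 1) : F = G := by
  have key : ∀ n : ℤ, F n = G n ∧ F (n + 1) = G (n + 1) := by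
    intro n
    induction n using Int.induction_on with
    | zero => exact ⟨h₀, h₁⟩
    | succ n ih =>
      refine ⟨ih.2, ?_⟩
      rw [hF, hG, show (n : ℤ) + 1 + 1 - 1 = n + 1 by ring,
        show (n : ℤ) + 1 + 1 - 2 = n by ring, ih.1, ih.2]
    | pred n ih =>
      refine ⟨?_, by simpa using ih.1⟩
      apply hq.mul_left_cancel
      have hFn := hF (-(n : ℤ) + 1)
      have hGn := hG (-(n : ℤ) + 1)
      rw [show -(n : ℤ) + 1 - 1 = -n by ring, show -(n : ℤ) + 1 - 2 = -n - 1 by ring] at hFn hGn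
      linear_combination hFn - hGn - ih.2 + p * ih.1
  exact funext fun n => (key n).1

end SolvesLucasRec

section LucasIdentities

variable {p q : R} {U V W : ℤ → R}

theorem SolvesLucasRec.apply_two_eq_p (hU : SolvesLucasRec p q U) (hU0 : U 0 = 0) (hU1 : U 1 = 1) :
    U 2 = p := by
  rw [hU 2]; norm_num [hU0, hU1]

theorem SolvesLucasRec.apply_two_eq_sq_sub (hV : SolvesLucasRec p q V) (hV0 : V 0 = 2)
    (hV1 : V 1 = p) :
    V 2 = p ^ 2 - 2 * q := by
  rw [hV 2]; norm_num [hV0, hV1]; ring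

theorem add_two_mul_add_sub_two_mul (hq : q ^ 2 = 1) (hV : SolvesLucasRec p q V) (hV0 : V 0 = 2)
    (hV1 : V 1 = p) (hW : SolvesLucasRec p q W) (x t : ℤ) :
    W (x + 2 * t) + W (x - 2 * t) = W x * V (2 * t) := by
  have key := SolvesLucasRec.ext isUnit_one
    ((hW.comp_two_mul_add hq x).add (hW.comp_sub_two_mul hq x))
    ((hV.comp_two_mul_add hq 0).const_mul (W x)) (by simp [hV0]; ring) ?_
  · simpa using congrFun key t
  · have h := hW.eq_sub_two (x + 2)
    rw [hq, add_sub_cancel_right, show x + 2 - 4 = x - 2 by ring] at h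
    simp only [mul_one, zero_add, hV.apply_two_eq_sq_sub hV0 hV1]
    linear_combination h

theorem add_two_sub_sub_two_eq_mul (hq : q ^ 2 = 1) (hU : SolvesLucasRec p q U) (hU0 : U 0 = 0)
    (hU1 : U 1 = 1) (hV : SolvesLucasRec p q V) (hV0 : V 0 = 2) (hV1 : V 1 = p) (x : ℤ) :
    V (x + 2) - V (x - 2) = p * (p ^ 2 - 4 * q) * U x := by
  have hV_neg_one : V (-1) = p * q := by
    have h := hV 1; norm_num [hV0, hV1] at h
    linear_combination q * h - V (-1) * hq
  have hV_neg_two : V (-2) = p ^ 2 - 2 * q := by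
    have h := hV 0; norm_num [hV0, hV_neg_one] at h
    linear_combination q * h + (p ^ 2 - V (-2)) * hq
  have hV2 := hV.apply_two_eq_sq_sub hV0 hV1
  have hV3 : V 3 = p ^ 3 - 3 * p * q := by rw [hV 3]; norm_num [hV2, hV1]; ring
  have key := SolvesLucasRec.ext (IsUnit.of_mul_eq_one q (by rw [← sq, hq]))
    ((hV.comp_add_const 2).sub (hV.comp_add_const (-2))) (hU.const_mul (p * (p ^ 2 - 4 * q)))
    (by norm_num [hU0, hV2, hV_neg_two]) (by norm_num [hU1, hV3, hV_neg_one]; ring)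
  simpa [← sub_eq_add_neg] using congrFun key x

theorem add_two_mul_sub_sub_two_mul (hq : q ^ 2 = 1) (hU : SolvesLucasRec p q U) (hU0 : U 0 = 0)
    (hU1 : U 1 = 1) (hV : SolvesLucasRec p q V) (hV0 : V 0 = 2) (hV1 : V 1 = p) (x t : ℤ) :
    V (x + 2 * t) - V (x - 2 * t) = (p ^ 2 - 4 * q) * U x * U (2 * t) := by
  have key := SolvesLucasRec.ext isUnit_one
    ((hV.comp_two_mul_add hq x).sub (hV.comp_sub_two_mul hq x))
    ((hU.comp_two_mul_add hq 0).const_mul ((p ^ 2 - 4 * q) * U x)) (by simp [hU0]) ?_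
  · simpa [mul_assoc] using congrFun key t
  · simp only [mul_one, zero_add, hU.apply_two_eq_p hU0 hU1,
      add_two_sub_sub_two_eq_mul hq hU hU0 hU1 hV hV0 hV1 x]
    ring

theorem sq_apply_two_mul (hq : q ^ 2 = 1) (hV : SolvesLucasRec p q V) (hV0 : V 0 = 2)
    (hV1 : V 1 = p) (j : ℤ) : V (2 * j) ^ 2 = V (4 * j) + 2 := by
  have h := add_two_mul_add_sub_two_mul hq hV hV0 hV1 hV (2 * j) j
  rw [sub_self, hV0, show 2 * j + 2 * j = 4 * j by ring] at h
  linear_combination -h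

theorem apply_two_mul_alternating_sum_sq (hq : q ^ 2 = 1) (hV : SolvesLucasRec p q V)
    (hV0 : V 0 = 2) (hV1 : V 1 = p) (k : ℤ) (N : ℕ) :
    V 2 * ∑ i ∈ Finset.range N, (-1 : R) ^ i * V (2 * k + 2 * i) ^ 2 =
      V (4 * k - 2) - (-1) ^ N * V (4 * k + 4 * N - 2) +
        2 * V 2 * ∑ i ∈ Finset.range N, (-1 : R) ^ i := by
  induction N with
  | zero => simp
  | succ N ih =>
    have hsq := sq_apply_two_mul hq hV hV0 hV1 (k + N)
    have hstep := add_two_mul_add_sub_two_mul hq hV hV0 hV1 hV (4 * k + 4 * N) 1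
    rw [show 2 * (k + N) = 2 * k + 2 * N by ring, show 4 * (k + N) = 4 * k + 4 * N by ring] at hsq
    rw [mul_one] at hstep
    simp only [Finset.sum_range_succ]
    push_cast
    rw [show 4 * k + 4 * (N + 1) - 2 = 4 * k + 4 * N + 2 by ring]
    linear_combination ih + (-1) ^ N * (V 2 * hsq - hstep)

theorem apply_two_mul_alternating_sum_sq_two_mul_add_one (hq : q ^ 2 = 1)
    (hV : SolvesLucasRec p q V) (hV0 : V 0 = 2) (hV1 : V 1 = p) (k : ℤ) (m : ℕ) :
    V 2 * ∑ i ∈ Finset.range (2 * m + 1), (-1 : R) ^ i * V (2 * k + 2 * i) ^ 2 =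
      V (4 * m + 2) * V (2 * k + 2 * m) ^ 2 - 2 * (V (4 * m + 2) - V 2) := by
  have hodd : Odd (2 * m + 1) := odd_two_mul_add_one m
  have hsum := apply_two_mul_alternating_sum_sq hq hV hV0 hV1 k (2 * m + 1)
  rw [neg_one_geom_sum, if_neg (Nat.not_even_iff_odd.2 hodd), hodd.neg_one_pow] at hsum
  have hprod := add_two_mul_add_sub_two_mul hq hV hV0 hV1 hV (4 * k + 4 * m) (2 * m + 1)
  have hsq := sq_apply_two_mul hq hV hV0 hV1 (k + m)
  push_cast at hsum
  rw [show 4 * k + 4 * (2 * m + 1) - 2 = 4 * k + 8 * m + 2 by ring] at hsum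
  rw [show 4 * (k + m) = 4 * k + 4 * m by ring, show 2 * (k + m) = 2 * k + 2 * m by ring] at hsq
  rw [show 4 * k + 4 * m + 2 * (2 * m + 1) = 4 * k + 8 * m + 2 by ring,
    show 4 * k + 4 * m - 2 * (2 * m + 1) = 4 * k - 2 by ring,
    show 2 * (2 * (m : ℤ) + 1) = 4 * m + 2 by ring] at hprod
  linear_combination hsum + hprod - V (4 * m + 2) * hsq

theorem apply_two_mul_alternating_sum_sq_two_mul_add_two (hq : q ^ 2 = 1)
    (hU : SolvesLucasRec p q U) (hU0 : U 0 = 0) (hU1 : U 1 = 1) (hV : SolvesLucasRec p q V)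
    (hV0 : V 0 = 2) (hV1 : V 1 = p) (k : ℤ) (m : ℕ) :
    V 2 * ∑ i ∈ Finset.range (2 * m + 2), (-1 : R) ^ i * V (2 * k + 2 * i) ^ 2 =
      -((p ^ 2 - 4 * q) * U (4 * k + 4 * m + 2) * U (4 * m + 4)) := by
  have heven : Even (2 * m + 2) := ⟨m + 1, by ring⟩
  have hsum := apply_two_mul_alternating_sum_sq hq hV hV0 hV1 k (2 * m + 2)
  rw [neg_one_geom_sum, if_pos heven, heven.neg_one_pow] at hsum
  have hdiff :=
    add_two_mul_sub_sub_two_mul hq hU hU0 hU1 hV hV0 hV1 (4 * k + 4 * m + 2) (2 * m + 2)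
  push_cast at hsum
  rw [show 4 * k + 4 * (2 * m + 2) - 2 = 4 * k + 8 * m + 6 by ring] at hsum
  rw [show 4 * k + 4 * m + 2 + 2 * (2 * m + 2) = 4 * k + 8 * m + 6 by ring,
    show 4 * k + 4 * m + 2 - 2 * (2 * m + 2) = 4 * k - 2 by ring,
    show 2 * (2 * (m : ℤ) + 2) = 4 * m + 4 by ring] at hdiff
  linear_combination hsum - hdiff

end LucasIdentities

theorem Int.sq_sub_two_mul_ne_zero (p : ℤ) {q : ℤ} (hq : q = 1 ∨ q = -1) : p ^ 2 - 2 * q ≠ 0 := by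
  have h2 := Int.sq_ne_two_mod_four p
  have hnonneg := mul_self_nonneg p
  rcases hq with rfl | rfl <;> intro h <;> rw [sq] at h <;> omega

theorem stmt_18_general (p q : ℤ) (hq : q = 1 ∨ q = -1)
    (U V : ℤ → ℤ)
    (hU0 : U 0 = 0) (hU1 : U 1 = 1)
    (hUrec : ∀ n : ℤ, U n = p * U (n - 1) - q * U (n - 2))
    (hV0 : V 0 = 2) (hV1 : V 1 = p)
    (hVrec : ∀ n : ℤ, V n = p * V (n - 1) - q * V (n - 2))
    (a : ℤ → ℤ) (ha : ∀ n : ℤ, p * a n = U (2 * n))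
    (c d : ℤ → ℤ) (hc : ∀ n : ℤ, U 4 * c n = U (4 * n + 4)) (hd : ∀ n : ℤ, V 2 * d n = V (4 * n + 2))
    (b : ℤ → ℤ) (hb : ∀ n : ℤ, p ^ 2 * (p ^ 2 - 4 * q) * b n = d (n + 1) - 1)
    (k : ℤ) (m : ℕ) :
    (∑ i ∈ Finset.range (2 * m + 1), (-1 : ℤ) ^ i * V (2 * k + 2 * i) ^ 2) =
        d m * V (2 * k + 2 * m) ^ 2 - 2 * p ^ 2 * (p ^ 2 - 4 * q) * b ((m : ℤ) - 1) ∧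
      (∑ i ∈ Finset.range (2 * m + 2), (-1 : ℤ) ^ i * V (2 * k + 2 * i) ^ 2) =
        p ^ 2 * (p ^ 2 - 4 * q) * c m * (1 - a (k + m + 1) * V (2 * k + 2 * m)) := by
  have hq2 : q ^ 2 = 1 := by rcases hq with rfl | rfl <;> norm_num
  have hV2_ne : V 2 ≠ 0 :=
    SolvesLucasRec.apply_two_eq_sq_sub hVrec hV0 hV1 ▸ Int.sq_sub_two_mul_ne_zero p hq
  constructor
  · refine mul_left_cancel₀ hV2_ne ?_
    have hbm := hb (m - 1)
    rw [sub_add_cancel] at hbm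
    rw [apply_two_mul_alternating_sum_sq_two_mul_add_one hq2 hVrec hV0 hV1]
    linear_combination (V (2 * k + 2 * m) ^ 2 - 2) * (hd m).symm + 2 * V 2 * hbm
  · refine mul_left_cancel₀ hV2_ne ?_
    have hU2 : U 2 = p := SolvesLucasRec.apply_two_eq_p hUrec hU0 hU1
    have hU_last : U (4 * m + 4) = p * V 2 * c m := by
      have h := add_two_mul_add_sub_two_mul hq2 hVrec hV0 hV1 hUrec 2 1
      norm_num [hU0, hU2] at h
      rw [← hc, ← h]
    have hU_first : U (4 * k + 4 * m + 2) = p * (a (k + m + 1) * V (2 * k + 2 * m) - 1) := by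
      have h := add_two_mul_add_sub_two_mul hq2 hVrec hV0 hV1 hUrec (2 * (k + m + 1)) (k + m)
      rw [show 2 * (k + m + 1) + 2 * (k + m) = 4 * k + 4 * m + 2 by ring,
        show 2 * (k + m + 1) - 2 * (k + m) = 2 by ring, hU2, ← ha,
        show 2 * (k + m) = 2 * k + 2 * m by ring] at h
      linear_combination h
    rw [apply_two_mul_alternating_sum_sq_two_mul_add_two hq2 hUrec hU0 hU1 hVrec hV0 hV1,
      hU_first, hU_last]
    ring

theorem stmt_18 (p q : ℤ) (hp : p ≠ 0) (hq : q = 1 ∨ q = -1)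
    (hΔ : p ^ 2 - 4 * q ≠ 0)
    (U V : ℤ → ℤ)
    (hU0 : U 0 = 0) (hU1 : U 1 = 1)
    (hUrec : ∀ n : ℤ, U n = p * U (n - 1) - q * U (n - 2))
    (hV0 : V 0 = 2) (hV1 : V 1 = p)
    (hVrec : ∀ n : ℤ, V n = p * V (n - 1) - q * V (n - 2))
    (a : ℤ → ℤ) (ha : ∀ n : ℤ, p * a n = U (2 * n))
    (c d : ℤ → ℤ) (hc : ∀ n : ℤ, U 4 * c n = U (4 * n + 4)) (hd : ∀ n : ℤ, V 2 * d n = V (4 * n + 2))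
    (b : ℤ → ℤ) (hb : ∀ n : ℤ, p ^ 2 * (p ^ 2 - 4 * q) * b n = d (n + 1) - 1)
    (k : ℤ) (m : ℕ) :
    (∑ i ∈ Finset.range (2 * m + 1), (-1 : ℤ) ^ i * V (2 * k + 2 * i) ^ 2) =
        d m * V (2 * k + 2 * m) ^ 2 - 2 * p ^ 2 * (p ^ 2 - 4 * q) * b ((m : ℤ) - 1) ∧
      (∑ i ∈ Finset.range (2 * m + 2), (-1 : ℤ) ^ i * V (2 * k + 2 * i) ^ 2) =
        p ^ 2 * (p ^ 2 - 4 * q) * c m * (1 - a (k + m + 1) * V (2 * k + 2 * m)) :=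
  stmt_18_general p q hq U V hU0 hU1 hUrec hV0 hV1 hVrec a ha c d hc hd b hb k m
end
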